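/- arXiv:2401.05562 — 7 statements merged into one kernel-verified Lean document; each statement's English description precedes it below -/
import Mathlib

section
/- Let G be a finite commutative group of cardinality q with q ≥ 1, and let h ∈ G be a generator of G. Then for every fixed element c ∈ G, the pushforward of the uniform probability distribution on ZMod q under the map r ↦ c * h^r equals the uniform probability distribution on G. In particular, taking c = g^w, the distribution of the Pedersen commitment g^w * h^r with uniformly random r is the uniform distribution on G, independent of the committed value w. -/
lemma pmf_map_equiv_uniform {α β : Type*} [Fintype α] [Fintype β] [Nonempty α] [Nonempty β]
    (e : α ≃ β) : PMF.map e (PMF.uniformOfFintype α) = PMF.uniformOfFintype β := by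
  ext b
  rw [PMF.map_apply]
  rw [tsum_eq_single (e.symm b) (by intro a ha; simp [Equiv.eq_symm_apply] at ha; simp only [PMF.uniformOfFintype_apply]; rw [if_neg (fun hh => ha hh.symm)])]
  simp [PMF.uniformOfFintype_apply, Fintype.card_congr e]

/-- Information-theoretic hiding: if `h` generates a finite commutative group `G`
of cardinality `q ≥ 1`, then for any fixed `c ∈ G` the pushforward of the uniform
distribution on `ZMod q` under `r ↦ c * h ^ r.val` is uniform on `G`. -/
theorem pedersen_uniform_commitment {G : Type*} [CommGroup G] [Fintype G]
    {q : ℕ} [NeZero q] (hq : Fintype.card G = q) (h : G)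
    (hgen : ∀ x : G, x ∈ Subgroup.zpowers h) (c : G) :
    PMF.map (fun r : ZMod q => c * h ^ r.val) (PMF.uniformOfFintype (ZMod q)) =
      PMF.uniformOfFintype G := by
  have htop : Subgroup.zpowers h = ⊤ := by
    ext x; simp [hgen x]
  have hord : orderOf h = q := by
    rw [orderOf_eq_card_of_forall_mem_zpowers hgen, Nat.card_eq_fintype_card, hq]
  have hinj : Function.Injective (fun r : ZMod q => c * h ^ r.val) := by
    intro a b hab
    have hab := mul_left_cancel hab
    rw [pow_eq_pow_iff_modEq, hord] at hab
    have ha := ZMod.val_lt a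
    have hb := ZMod.val_lt b
    have : a.val = b.val := Nat.ModEq.eq_of_lt_of_lt hab ha hb
    exact ZMod.val_injective q this
  have hbij : Function.Bijective (fun r : ZMod q => c * h ^ r.val) := by
    rw [Fintype.bijective_iff_injective_and_card]
    exact ⟨hinj, by simp [hq]⟩
  exact pmf_map_equiv_uniform (Equiv.ofBijective _ hbij)
end

section
/- Let q be a prime, G a group, and g ∈ G an element of order q. Let a ∈ ℤ and set h = g^a. Suppose integers w, r, w', r' satisfy g^w * h^r = g^{w'} * h^{r'}. Then: (i) if r ≡ r' (mod q), then w ≡ w' (mod q); and (ii) if moreover it is not the case that both w ≡ w' (mod q) and r ≡ r' (mod q), then r ≢ r' (mod q) and, in ZMod q, a = (w − w') * (r' − r)⁻¹ (where w, w', r, r', a denote their images in ZMod q and ⁻¹ is inversion in the field ZMod q). Hence any party producing two distinct openings of the same Pedersen commitment can compute the discrete logarithm a of h with respect to g. -/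
/-- Computational binding of the Pedersen commitment: two distinct openings of
the same commitment yield the discrete logarithm `a` of `h = g^a`. -/
theorem pedersen_binding_dlog {G : Type*} [Group G] {q : ℕ} (hq : q.Prime)
    (g : G) (hg : orderOf g = q) (a : ℤ) (h : G) (hh : h = g ^ a)
    (w r w' r' : ℤ) (heq : g ^ w * h ^ r = g ^ w' * h ^ r') :
    (r ≡ r' [ZMOD q] → w ≡ w' [ZMOD q]) ∧
    (¬ (w ≡ w' [ZMOD q] ∧ r ≡ r' [ZMOD q]) →
      ¬ (r ≡ r' [ZMOD q]) ∧
      (a : ZMod q) = ((w : ZMod q) - (w' : ZMod q)) * ((r' : ZMod q) - (r : ZMod q))⁻¹) := by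
  haveI : Fact q.Prime := ⟨hq⟩
  subst hh
  have hpow : g ^ (w + a * r - (w' + a * r')) = 1 := by
    rw [zpow_sub, zpow_add, zpow_add, zpow_mul, zpow_mul]
    rw [heq]
    group
  have hdvd : ((q : ℤ)) ∣ (w + a * r - (w' + a * r')) := by
    rw [← hg]
    exact (orderOf_dvd_iff_zpow_eq_one).2 hpow
  have hz : ((w : ZMod q) + a * r) = (w' : ZMod q) + a * r' := by
    have := (ZMod.intCast_zmod_eq_zero_iff_dvd _ q).2 hdvd
    push_cast at this
    linear_combination this
  have hwr : ∀ (hr : (r : ZMod q) = r'), (w : ZMod q) = w' := by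
    intro hr
    have : (w : ZMod q) + a * r = w' + a * r := by rw [hz, hr]
    linear_combination this
  constructor
  · intro hr
    exact (ZMod.intCast_eq_intCast_iff _ _ _).1
      (hwr ((ZMod.intCast_eq_intCast_iff _ _ _).2 hr))
  · intro hne
    have hrne : (r : ZMod q) ≠ r' := by
      intro hr
      exact hne ⟨(ZMod.intCast_eq_intCast_iff _ _ _).1 (hwr hr),
        (ZMod.intCast_eq_intCast_iff _ _ _).1 hr⟩
    refine ⟨fun hr => hrne ((ZMod.intCast_eq_intCast_iff _ _ _).2 hr), ?_⟩
    have hsub : (r' : ZMod q) - r ≠ 0 := sub_ne_zero.2 (Ne.symm hrne)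
    rw [← div_eq_mul_inv, eq_div_iff hsub]
    linear_combination -hz
end

section
/- Let N and f be natural numbers, let v : Fin N → ℝ be monotone (i.e. the values are sorted in ascending order), and let B be a Finset of indices in Fin N (the benign indices) whose complement has cardinality at most f. Then for every index i with f ≤ (i : ℕ) and (i : ℕ) < N − f (i.e. every index surviving after trimming the smallest f and largest f values), there exist j, j' ∈ B with v j ≤ v i and v i ≤ v j'. In other words, every untrimmed value lies between some two benign values. -/
/-- Every value surviving the trimming of the smallest `f` and largest `f`
entries of a sorted list lies between two benign values, provided at most `f`
of the `N` positions are non-benign. -/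
theorem trimmed_value_between_benign {N f : ℕ} (v : Fin N → ℝ) (hv : Monotone v)
    (B : Finset (Fin N)) (hB : (Finset.univ \ B).card ≤ f)
    (i : Fin N) (hif : f ≤ (i : ℕ)) (hiN : (i : ℕ) < N - f) :
    (∃ j ∈ B, v j ≤ v i) ∧ (∃ j' ∈ B, v i ≤ v j') := by
  constructor
  · by_contra h
    push_neg at h
    have hsub : Finset.Iic i ⊆ Finset.univ \ B := by
      intro j hj
      simp only [Finset.mem_Iic] at hj
      simp only [Finset.mem_sdiff, Finset.mem_univ, true_and]
      intro hjB
      exact absurd (hv hj) (not_le.mpr (h j hjB))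
    have hc := (Finset.card_le_card hsub).trans hB
    rw [Fin.card_Iic] at hc
    omega
  · by_contra h
    push_neg at h
    have hsub : Finset.Ici i ⊆ Finset.univ \ B := by
      intro j hj
      simp only [Finset.mem_Ici] at hj
      simp only [Finset.mem_sdiff, Finset.mem_univ, true_and]
      intro hjB
      exact absurd (hv hj) (not_le.mpr (h j hjB))
    have hc := (Finset.card_le_card hsub).trans hB
    rw [Fin.card_Ici] at hc
    omega
end

section
/- Let N and f be natural numbers with 2 * f < N, let v : Fin N → ℝ be monotone, and let B be a nonempty Finset of indices in Fin N whose complement has cardinality at most f. Define the trimmed mean T = (∑_{i : f ≤ (i:ℕ) < N − f} v i) / (N − 2f). Then the minimum of v over B is at most T and T is at most the maximum of v over B; that is, the trimmed mean lies within the range of the benign values. -/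
lemma card_filter_fin_val (N : ℕ) (p : ℕ → Prop) [DecidablePred p] :
    (Finset.univ.filter fun i : Fin N => p i.val).card = ((Finset.range N).filter p).card := by
  rw [← Finset.card_image_of_injective _ Fin.val_injective]
  congr 1
  ext a
  simp only [Finset.mem_image, Finset.mem_filter, Finset.mem_univ, true_and,
    Finset.mem_range]
  constructor
  · rintro ⟨i, hp, rfl⟩; exact ⟨i.isLt, hp⟩
  · rintro ⟨ha, hp⟩; exact ⟨⟨a, ha⟩, hp, rfl⟩

lemma exists_benign {N f : ℕ} (B : Finset (Fin N))
    (hB : (Finset.univ \ B).card ≤ f) (s : Finset (Fin N)) (hs : f < s.card) :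
    ∃ b ∈ s, b ∈ B := by
  by_contra h
  push_neg at h
  have hsub : s ⊆ Finset.univ \ B := by
    intro x hx
    simp [h x hx]
  have := Finset.card_le_card hsub
  omega

/-- The trimmed mean lies within the range of the benign values. -/
theorem trimmed_mean_within_benign_range {N f : ℕ} (hNf : 2 * f < N)
    (v : Fin N → ℝ) (hv : Monotone v) (B : Finset (Fin N)) (hBne : B.Nonempty)
    (hB : (Finset.univ \ B).card ≤ f) :
    B.inf' hBne v ≤
        (∑ i ∈ Finset.univ.filter (fun i : Fin N => f ≤ (i : ℕ) ∧ (i : ℕ) < N - f), v i) /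
          ((N - 2 * f : ℕ) : ℝ) ∧
      (∑ i ∈ Finset.univ.filter (fun i : Fin N => f ≤ (i : ℕ) ∧ (i : ℕ) < N - f), v i) /
          ((N - 2 * f : ℕ) : ℝ) ≤ B.sup' hBne v := by
  set S := Finset.univ.filter (fun i : Fin N => f ≤ (i : ℕ) ∧ (i : ℕ) < N - f) with hS
  have hcard : S.card = N - 2 * f := by
    rw [hS, card_filter_fin_val N (fun a => f ≤ a ∧ a < N - f)]
    have : (Finset.range N).filter (fun a => f ≤ a ∧ a < N - f) = Finset.Ico f (N - f) := by
      ext a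
      simp only [Finset.mem_filter, Finset.mem_range, Finset.mem_Ico]
      omega
    rw [this, Nat.card_Ico]
    omega
  have hpos : (0 : ℝ) < ((N - 2 * f : ℕ) : ℝ) := by
    have : 0 < N - 2 * f := by omega
    exact_mod_cast this
  -- lower bound for each trimmed index
  have hlow : ∀ i ∈ S, B.inf' hBne v ≤ v i := by
    intro i hi
    rw [hS, Finset.mem_filter] at hi
    obtain ⟨b, hbs, hbB⟩ := exists_benign B hB
        (Finset.univ.filter fun j : Fin N => (j : ℕ) ≤ (i : ℕ)) (by
      rw [card_filter_fin_val N (fun a => a ≤ (i : ℕ))]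
      have : (Finset.range N).filter (fun a => a ≤ (i : ℕ)) = Finset.range ((i : ℕ) + 1) := by
        ext a
        simp only [Finset.mem_filter, Finset.mem_range]
        have := i.isLt
        omega
      rw [this, Finset.card_range]
      omega)
    rw [Finset.mem_filter] at hbs
    exact le_trans (Finset.inf'_le v hbB) (hv (Fin.le_def.mpr hbs.2))
  have hhigh : ∀ i ∈ S, v i ≤ B.sup' hBne v := by
    intro i hi
    rw [hS, Finset.mem_filter] at hi
    obtain ⟨b, hbs, hbB⟩ := exists_benign B hB
        (Finset.univ.filter fun j : Fin N => (i : ℕ) ≤ (j : ℕ)) (by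
      rw [card_filter_fin_val N (fun a => (i : ℕ) ≤ a)]
      have : (Finset.range N).filter (fun a => (i : ℕ) ≤ a) = Finset.Ico (i : ℕ) N := by
        ext a
        simp only [Finset.mem_filter, Finset.mem_range, Finset.mem_Ico]
        omega
      rw [this, Nat.card_Ico]
      omega)
    rw [Finset.mem_filter] at hbs
    exact le_trans (hv (Fin.le_def.mpr hbs.2)) (Finset.le_sup' v hbB)
  constructor
  · rw [le_div_iff₀ hpos]
    calc B.inf' hBne v * ((N - 2 * f : ℕ) : ℝ)
        = S.card • B.inf' hBne v := by rw [hcard]; rw [nsmul_eq_mul]; ring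
      _ ≤ ∑ i ∈ S, v i := Finset.card_nsmul_le_sum S v _ hlow
  · rw [div_le_iff₀ hpos]
    calc (∑ i ∈ S, v i) ≤ S.card • B.sup' hBne v := Finset.sum_le_card_nsmul S v _ hhigh
      _ = B.sup' hBne v * ((N - 2 * f : ℕ) : ℝ) := by rw [hcard]; rw [nsmul_eq_mul]; ring
end

section
/- Let N and f be natural numbers with 2 * f < N, let v : Fin N → ℝ be monotone, and let B be a nonempty Finset of indices in Fin N whose complement has cardinality at most f. Let T = (∑_{i : f ≤ (i:ℕ) < N − f} v i) / (N − 2f) be the trimmed mean and M = (∑_{i ∈ B} v i) / B.card the mean of the benign values. Then |T − M| ≤ (max of v over B) − (min of v over B). That is, in each coordinate the trimmed-mean global update deviates from the benign average by at most the spread of the benign values. -/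
/-- Per-coordinate deviation bound: the trimmed mean deviates from the mean of
the benign values by at most the spread of the benign values. -/
theorem trimmed_mean_deviation_bound {N f : ℕ} (hNf : 2 * f < N)
    (v : Fin N → ℝ) (hv : Monotone v) (B : Finset (Fin N)) (hBne : B.Nonempty)
    (hB : (Finset.univ \ B).card ≤ f) :
    |(∑ i ∈ Finset.univ.filter (fun i : Fin N => f ≤ (i : ℕ) ∧ (i : ℕ) < N - f), v i) /
          ((N - 2 * f : ℕ) : ℝ) -
        (∑ i ∈ B, v i) / (B.card : ℝ)| ≤
      B.sup' hBne v - B.inf' hBne v := by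
  set m := B.inf' hBne v with hm
  set Ms := B.sup' hBne v with hMs
  set S := Finset.univ.filter (fun i : Fin N => f ≤ (i : ℕ) ∧ (i : ℕ) < N - f) with hS
  -- each trimmed value lies in [m, Ms]
  have key : ∀ i ∈ S, m ≤ v i ∧ v i ≤ Ms := by
    intro i hi
    rw [hS, Finset.mem_filter] at hi
    obtain ⟨-, hfi, hiN⟩ := hi
    constructor
    · -- some j ∈ B with j ≤ i
      by_contra h
      push_neg at h
      have hall : ∀ j : Fin N, (j : ℕ) ≤ (i : ℕ) → j ∉ B := by
        intro j hj hjB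
        exact absurd (le_trans (Finset.inf'_le v hjB) (hv hj)) (not_le.2 h)
      have hsub : Finset.univ.filter (fun j : Fin N => (j : ℕ) ≤ (i : ℕ)) ⊆
          Finset.univ \ B := by
        intro j hj
        rw [Finset.mem_filter] at hj
        exact Finset.mem_sdiff.2 ⟨Finset.mem_univ j, hall j hj.2⟩
      have hc : (Finset.univ.filter (fun j : Fin N => (j : ℕ) ≤ (i : ℕ))).card ≤ f :=
        le_trans (Finset.card_le_card hsub) hB
      have hmem : i ∈ Finset.univ.filter (fun j : Fin N => (j : ℕ) ≤ (i : ℕ)) := by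
        simp
      -- the filter contains all j with j.val ≤ i.val, so has card i+1
      have hcard : (Finset.univ.filter (fun j : Fin N => (j : ℕ) ≤ (i : ℕ))).card = i + 1 := by
        have himg : (Finset.univ.filter (fun j : Fin N => (j : ℕ) ≤ (i : ℕ))).image Fin.val
            = Finset.Iic (i : ℕ) := by
          ext a
          simp only [Finset.mem_image, Finset.mem_filter, Finset.mem_univ, true_and,
            Finset.mem_Iic]
          constructor
          · rintro ⟨j, hj, rfl⟩; exact hj
          · intro ha
            exact ⟨⟨a, lt_of_le_of_lt ha i.isLt⟩, ha, rfl⟩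
        have := Finset.card_image_of_injective
          (Finset.univ.filter (fun j : Fin N => (j : ℕ) ≤ (i : ℕ))) Fin.val_injective
        rw [himg, Nat.card_Iic] at this
        omega
      omega
    · -- some j ∈ B with i ≤ j
      by_contra h
      push_neg at h
      have hall : ∀ j : Fin N, (i : ℕ) ≤ (j : ℕ) → j ∉ B := by
        intro j hj hjB
        exact absurd (le_trans (hv hj) (Finset.le_sup' v hjB)) (not_le.2 h)
      have hsub : Finset.univ.filter (fun j : Fin N => (i : ℕ) ≤ (j : ℕ)) ⊆
          Finset.univ \ B := by
        intro j hj
        rw [Finset.mem_filter] at hj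
        exact Finset.mem_sdiff.2 ⟨Finset.mem_univ j, hall j hj.2⟩
      have hc : (Finset.univ.filter (fun j : Fin N => (i : ℕ) ≤ (j : ℕ))).card ≤ f :=
        le_trans (Finset.card_le_card hsub) hB
      have hcard : (Finset.univ.filter (fun j : Fin N => (i : ℕ) ≤ (j : ℕ))).card = N - i := by
        have himg : (Finset.univ.filter (fun j : Fin N => (i : ℕ) ≤ (j : ℕ))).image Fin.val
            = Finset.Ico (i : ℕ) N := by
          ext a
          simp only [Finset.mem_image, Finset.mem_filter, Finset.mem_univ, true_and,
            Finset.mem_Ico]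
          constructor
          · rintro ⟨j, hj, rfl⟩; exact ⟨hj, j.isLt⟩
          · rintro ⟨ha, haN⟩
            exact ⟨⟨a, haN⟩, ha, rfl⟩
        have := Finset.card_image_of_injective
          (Finset.univ.filter (fun j : Fin N => (i : ℕ) ≤ (j : ℕ))) Fin.val_injective
        rw [himg, Nat.card_Ico] at this
        omega
      omega
  -- card of S
  have hScard : S.card = N - 2 * f := by
    have himg : S.image Fin.val = Finset.Ico f (N - f) := by
      ext a
      simp only [hS, Finset.mem_image, Finset.mem_filter, Finset.mem_univ, true_and,
        Finset.mem_Ico]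
      constructor
      · rintro ⟨j, hj, rfl⟩; exact hj
      · rintro ⟨ha, haN⟩
        exact ⟨⟨a, by omega⟩, ⟨ha, haN⟩, rfl⟩
    have := Finset.card_image_of_injective S Fin.val_injective
    rw [himg, Nat.card_Ico] at this
    omega
  have hm_le_Ms : m ≤ Ms := by
    obtain ⟨x, hx⟩ := hBne
    exact le_trans (Finset.inf'_le v hx) (Finset.le_sup' v hx)
  have hSpos : (0 : ℝ) < ((N - 2 * f : ℕ) : ℝ) := by
    have : 0 < N - 2 * f := by omega
    exact_mod_cast this
  have hBpos : (0 : ℝ) < (B.card : ℝ) := by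
    exact_mod_cast Finset.card_pos.2 hBne
  -- bounds on trimmed mean
  have hTlo : m ≤ (∑ i ∈ S, v i) / ((N - 2 * f : ℕ) : ℝ) := by
    rw [le_div_iff₀ hSpos]
    calc m * ((N - 2 * f : ℕ) : ℝ) = ∑ _i ∈ S, m := by
          rw [Finset.sum_const, hScard]; ring
      _ ≤ ∑ i ∈ S, v i := Finset.sum_le_sum (fun i hi => (key i hi).1)
  have hThi : (∑ i ∈ S, v i) / ((N - 2 * f : ℕ) : ℝ) ≤ Ms := by
    rw [div_le_iff₀ hSpos]
    calc (∑ i ∈ S, v i) ≤ ∑ _i ∈ S, Ms := Finset.sum_le_sum (fun i hi => (key i hi).2)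
      _ = Ms * ((N - 2 * f : ℕ) : ℝ) := by rw [Finset.sum_const, hScard]; ring
  -- bounds on benign mean
  have hMlo : m ≤ (∑ i ∈ B, v i) / (B.card : ℝ) := by
    rw [le_div_iff₀ hBpos]
    calc m * (B.card : ℝ) = ∑ _i ∈ B, m := by rw [Finset.sum_const]; ring
      _ ≤ ∑ i ∈ B, v i := Finset.sum_le_sum (fun i hi => Finset.inf'_le v hi)
  have hMhi : (∑ i ∈ B, v i) / (B.card : ℝ) ≤ Ms := by
    rw [div_le_iff₀ hBpos]
    calc (∑ i ∈ B, v i) ≤ ∑ _i ∈ B, Ms := Finset.sum_le_sum (fun i hi => Finset.le_sup' v hi)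
      _ = Ms * (B.card : ℝ) := by rw [Finset.sum_const]; ring
  rw [abs_sub_le_iff]
  constructor <;> linarith
end

section
/- Let ι be a linearly ordered type, s a Finset of ι, A an additive commutative group, w : ι → A, and a : ι → ι → A a symmetric array of masks (a i j = a j i for all i, j). For each i ∈ s define the cloaked value w̄ i = w i − (∑_{j ∈ s, j < i} a i j) + (∑_{j ∈ s, i < j} a i j). Then ∑_{i ∈ s} w̄ i = ∑_{i ∈ s} w i: all pairwise masks cancel, so the sum of the cloaked values equals the sum of the true values. -/
/-- The pairwise masks cancel: the sum of the cloaked values equals the sum of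
the true values. -/
theorem cloaked_sum_eq_sum {ι : Type*} [LinearOrder ι] (s : Finset ι)
    {A : Type*} [AddCommGroup A] (w : ι → A) (a : ι → ι → A)
    (ha : ∀ i j, a i j = a j i) :
    ∑ i ∈ s,
        (w i - (∑ j ∈ s.filter (fun j => j < i), a i j)
          + ∑ j ∈ s.filter (fun j => i < j), a i j) =
      ∑ i ∈ s, w i := by
  have key : ∑ i ∈ s, ∑ j ∈ s.filter (fun j => j < i), a i j
      = ∑ i ∈ s, ∑ j ∈ s.filter (fun j => i < j), a i j := by
    rw [Finset.sum_sigma', Finset.sum_sigma']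
    refine Finset.sum_nbij' (fun x => ⟨x.2, x.1⟩) (fun x => ⟨x.2, x.1⟩) ?_ ?_
      (fun _ _ => rfl) (fun _ _ => rfl) (fun x hx => ha x.1 x.2) <;>
    · rintro ⟨i, j⟩ h
      simp only [Finset.mem_sigma, Finset.mem_filter] at h ⊢
      tauto
  simp [Finset.sum_add_distrib, Finset.sum_sub_distrib, key]
end

section
/- Let ι be a linearly ordered type, s a Finset of ι, G a commutative group with fixed elements g, h ∈ G, and let w, r : ι → ℤ and symmetric integer mask arrays a, b : ι → ι → ℤ (a i j = a j i and b i j = b j i for all i, j). For each i ∈ s define w̄ i = w i − (∑_{j ∈ s, j < i} a i j) + (∑_{j ∈ s, i < j} a i j) and r̄ i = r i − (∑_{j ∈ s, j < i} b i j) + (∑_{j ∈ s, i < j} b i j). Then g^{∑_{i ∈ s} w̄ i} * h^{∑_{i ∈ s} r̄ i} = ∏_{i ∈ s} (g^{w i} * h^{r i}). That is, when all participants follow the protocol, the commitment of the aggregated cloaked values equals the product of the individual Pedersen commitments, so the final verification equation holds. -/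
lemma sum_filter_symm_swap {ι : Type*} [LinearOrder ι] (s : Finset ι)
    (c : ι → ι → ℤ) (hc : ∀ i j, c i j = c j i) :
    ∑ i ∈ s, ∑ j ∈ s.filter (fun j => j < i), c i j
      = ∑ i ∈ s, ∑ j ∈ s.filter (fun j => i < j), c i j := by
  calc ∑ i ∈ s, ∑ j ∈ s.filter (fun j => j < i), c i j
      = ∑ j ∈ s, ∑ i ∈ s.filter (fun i => j < i), c i j := by
        refine Finset.sum_comm' ?_
        intro x y
        simp only [Finset.mem_filter]
        tauto
    _ = ∑ i ∈ s, ∑ j ∈ s.filter (fun j => i < j), c i j := by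
        refine Finset.sum_congr rfl fun i _ => Finset.sum_congr rfl fun j _ => hc j i

lemma zpow_finset_sum {G : Type*} [CommGroup G] (g : G) {ι : Type*} (s : Finset ι)
    (f : ι → ℤ) : g ^ (∑ i ∈ s, f i) = ∏ i ∈ s, g ^ f i := by
  induction s using Finset.cons_induction with
  | empty => simp
  | cons i t hi ih => simp [zpow_add, ih]

/-- Final verification equation: the Pedersen commitment of the aggregated
cloaked values equals the product of individual commitments. -/
theorem aggregation_verification {ι : Type*} [LinearOrder ι] (s : Finset ι)
    {G : Type*} [CommGroup G] (g h : G) (w r : ι → ℤ) (a b : ι → ι → ℤ)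
    (ha : ∀ i j, a i j = a j i) (hb : ∀ i j, b i j = b j i) :
    g ^ (∑ i ∈ s,
          (w i - (∑ j ∈ s.filter (fun j => j < i), a i j)
            + ∑ j ∈ s.filter (fun j => i < j), a i j)) *
      h ^ (∑ i ∈ s,
          (r i - (∑ j ∈ s.filter (fun j => j < i), b i j)
            + ∑ j ∈ s.filter (fun j => i < j), b i j)) =
      ∏ i ∈ s, (g ^ w i * h ^ r i) := by
  have hw : (∑ i ∈ s,
      (w i - (∑ j ∈ s.filter (fun j => j < i), a i j)
        + ∑ j ∈ s.filter (fun j => i < j), a i j)) = ∑ i ∈ s, w i := by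
    simp only [Finset.sum_add_distrib, Finset.sum_sub_distrib,
      sum_filter_symm_swap s a ha]
    ring
  have hr : (∑ i ∈ s,
      (r i - (∑ j ∈ s.filter (fun j => j < i), b i j)
        + ∑ j ∈ s.filter (fun j => i < j), b i j)) = ∑ i ∈ s, r i := by
    simp only [Finset.sum_add_distrib, Finset.sum_sub_distrib,
      sum_filter_symm_swap s b hb]
    ring
  rw [hw, hr, Finset.prod_mul_distrib, zpow_finset_sum, zpow_finset_sum]
end
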